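/- arXiv:2201.06024 — 4 statements merged into one kernel-verified Lean document; each statement's English description precedes it below -/
import Mathlib

section
/- Let $n \geq 1$, $m \geq 0$ with $m \leq n$, and let $e$ be an element of a commutative ring. For indeterminates $\beta_1, \dots, \beta_n$, one has $\sigma_m(e\beta_1 + \beta_1, e\beta_1 + \beta_2, \dots, e\beta_1 + \beta_n) = \sum_{\ell=0}^{m} e^{\ell} \binom{n - m + \ell}{\ell}\, \sigma_{m - \ell}(\beta_1, \dots, \beta_n)\, \beta_1^{\ell}$, where $\sigma_k$ denotes the elementary symmetric polynomial of degree $k$ in the listed arguments. -/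
open MvPolynomial Finset

lemma count_supersets {α : Type*} [DecidableEq α] (s S : Finset α) (hS : S ⊆ s)
    (m : ℕ) (hk : S.card ≤ m) :
    ((s.powersetCard m).filter (fun J => S ⊆ J)).card
      = (s.card - S.card).choose (m - S.card) := by
  rw [← Finset.card_sdiff_of_subset hS, ← Finset.card_powersetCard]
  apply Finset.card_bij' (fun J _ => J \ S) (fun T _ => T ∪ S)
  · intro J hJ
    simp only [mem_filter, mem_powersetCard] at hJ
    obtain ⟨⟨hJs, hJc⟩, hSJ⟩ := hJ
    rw [mem_powersetCard]
    exact ⟨sdiff_subset_sdiff hJs Subset.rfl, by rw [card_sdiff_of_subset hSJ, hJc]⟩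
  · intro T hT
    rw [mem_powersetCard] at hT
    obtain ⟨hTs, hTc⟩ := hT
    have hdisj : Disjoint T S := by
      refine Finset.disjoint_left.2 fun a ha haS => ?_
      exact (Finset.mem_sdiff.1 (hTs ha)).2 haS
    simp only [mem_filter, mem_powersetCard]
    refine ⟨⟨union_subset (hTs.trans sdiff_subset) hS, ?_⟩, subset_union_right⟩
    rw [card_union_of_disjoint hdisj, hTc]
    omega
  · intro J hJ
    simp only [mem_filter] at hJ
    exact sdiff_union_of_subset hJ.2
  · intro T hT
    rw [mem_powersetCard] at hT
    have hdisj : Disjoint T S := by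
      refine Finset.disjoint_left.2 fun a ha haS => ?_
      exact (Finset.mem_sdiff.1 (hT.1 ha)).2 haS
    simp [union_sdiff_distrib, sdiff_eq_self_of_disjoint hdisj]

lemma swap_sum {α M : Type*} [DecidableEq α] [AddCommMonoid M] (s : Finset α) (m k : ℕ)
    (hk : k ≤ m) (f : Finset α → M) :
    ∑ J ∈ s.powersetCard m, ∑ S ∈ J.powersetCard k, f S
      = ∑ S ∈ s.powersetCard k, (s.card - k).choose (m - k) • f S := by
  have h1 : ∀ J ∈ s.powersetCard m, ∑ S ∈ J.powersetCard k, f S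
      = ∑ S ∈ s.powersetCard k, if S ⊆ J then f S else 0 := by
    intro J hJ
    rw [mem_powersetCard] at hJ
    rw [← Finset.sum_filter]
    congr 1
    ext S
    simp only [mem_filter, mem_powersetCard]
    constructor
    · rintro ⟨hSJ, hSc⟩; exact ⟨⟨hSJ.trans hJ.1, hSc⟩, hSJ⟩
    · rintro ⟨⟨_, hSc⟩, hSJ⟩; exact ⟨hSJ, hSc⟩
  rw [Finset.sum_congr rfl h1, Finset.sum_comm]
  refine Finset.sum_congr rfl fun S hS => ?_
  rw [mem_powersetCard] at hS
  rw [← Finset.sum_filter, Finset.sum_const,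
    count_supersets s S hS.1 m (hS.2 ▸ hk), hS.2]

/-- Expansion of the shifted elementary symmetric polynomial:
`σ_m(eβ₁+β₁, …, eβ₁+β_n) = ∑_{ℓ=0}^m e^ℓ C(n-m+ℓ,ℓ) σ_{m-ℓ}(β) β₁^ℓ`. -/
theorem stmt4 {R : Type*} [CommRing R] (n m : ℕ) (hn : 1 ≤ n) (hm : m ≤ n) (e : R) :
    (∑ J ∈ (Finset.univ : Finset (Fin n)).powersetCard m,
        ∏ j ∈ J, (C e * X (⟨0, hn⟩ : Fin n) + X j))
      = ∑ ℓ ∈ Finset.range (m + 1), C e ^ ℓ *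
          (Nat.choose (n - m + ℓ) ℓ : MvPolynomial (Fin n) R) *
          (∑ J ∈ (Finset.univ : Finset (Fin n)).powersetCard (m - ℓ), ∏ j ∈ J, X j) *
          X (⟨0, hn⟩ : Fin n) ^ ℓ := by
  set c : MvPolynomial (Fin n) R := C e * X (⟨0, hn⟩ : Fin n) with hc
  have key : ∀ J ∈ (Finset.univ : Finset (Fin n)).powersetCard m,
      ∏ j ∈ J, (c + X j)
        = ∑ k ∈ Finset.range (m + 1), ∑ t ∈ J.powersetCard k,
            (∏ j ∈ t, X j) * c ^ (m - k) := by
    intro J hJ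
    rw [mem_powersetCard] at hJ
    have : ∏ j ∈ J, (c + X j) = ∏ j ∈ J, (X j + c) := by
      exact Finset.prod_congr rfl fun j _ => add_comm _ _
    rw [this, Finset.prod_add]
    rw [Finset.sum_powerset, hJ.2]
    refine Finset.sum_congr rfl fun k _ => Finset.sum_congr rfl fun t ht => ?_
    rw [mem_powersetCard] at ht
    rw [Finset.prod_const, Finset.card_sdiff_of_subset ht.1, hJ.2, ht.2]
  rw [Finset.sum_congr rfl key, Finset.sum_comm]
  rw [← Finset.sum_range_reflect]
  refine Finset.sum_congr rfl fun ℓ hℓ => ?_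
  rw [Finset.mem_range, Nat.lt_succ_iff] at hℓ
  have hsub : m + 1 - 1 - ℓ = m - ℓ := by omega
  rw [hsub]
  have hIJ : ∀ J ∈ (Finset.univ : Finset (Fin n)).powersetCard m,
      ∑ t ∈ J.powersetCard (m - ℓ), (∏ j ∈ t, X j) * c ^ (m - (m - ℓ))
        = ∑ t ∈ J.powersetCard (m - ℓ), (∏ j ∈ t, X j) * c ^ ℓ := by
    intro J _
    have : m - (m - ℓ) = ℓ := by omega
    rw [this]
  rw [Finset.sum_congr rfl hIJ,
    swap_sum _ m (m - ℓ) (Nat.sub_le m ℓ) (fun t => (∏ j ∈ t, X j) * c ^ ℓ)]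
  have hcard : (Finset.univ : Finset (Fin n)).card = n := Finset.card_fin n
  rw [hcard]
  have h1 : n - (m - ℓ) = n - m + ℓ := by omega
  have h2 : m - (m - ℓ) = ℓ := by omega
  rw [h1, h2]
  simp only [nsmul_eq_mul]
  rw [← Finset.mul_sum, ← Finset.sum_mul, hc, mul_pow]
  ring
end

section
/- Let $s \geq 1$ and let $e$ be an element of a commutative ring, and let $\beta_1, \dots, \beta_s$ be indeterminates. Then $\sigma_{s-1}(e\beta_1 + \beta_1, \dots, e\beta_1 + \beta_s) = \sum_{h'=1}^{s} \prod_{h \neq h'} (e\beta_1 + \beta_h) = \sum_{k=0}^{s-1} (k+1)\, e^{k} \beta_1^{k}\, \sigma_{s-1-k}(\beta_1, \dots, \beta_s)$. -/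
open MvPolynomial Finset

/-- `σ_{s-1}(eβ₁+β₁,…,eβ₁+β_s) = ∑_{h'} ∏_{h≠h'} (eβ₁+β_h)
  = ∑_{k=0}^{s-1} (k+1) e^k β₁^k σ_{s-1-k}(β)`. -/
theorem stmt6 {R : Type*} [CommRing R] (s : ℕ) (hs : 1 ≤ s) (e : R) :
    (∑ J ∈ (Finset.univ : Finset (Fin s)).powersetCard (s - 1),
        ∏ h ∈ J, (C e * X (⟨0, hs⟩ : Fin s) + X h))
      = ∑ h' : Fin s, ∏ h ∈ Finset.univ.erase h', (C e * X (⟨0, hs⟩ : Fin s) + X h) ∧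
    (∑ h' : Fin s, ∏ h ∈ Finset.univ.erase h', (C e * X (⟨0, hs⟩ : Fin s) + X h))
      = ∑ k ∈ Finset.range s, ((k + 1 : ℕ) : MvPolynomial (Fin s) R) * C e ^ k *
          X (⟨0, hs⟩ : Fin s) ^ k *
          (∑ J ∈ (Finset.univ : Finset (Fin s)).powersetCard (s - 1 - k), ∏ j ∈ J, X j) := by
  set A : MvPolynomial (Fin s) R := C e * X (⟨0, hs⟩ : Fin s) with hA
  have h1 : (∑ J ∈ (Finset.univ : Finset (Fin s)).powersetCard (s - 1),
        ∏ h ∈ J, (A + X h))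
      = ∑ h' : Fin s, ∏ h ∈ Finset.univ.erase h', (A + X h) := by
    refine (Finset.sum_bij (fun (h' : Fin s) _ => Finset.univ.erase h') ?_ ?_ ?_ ?_).symm
    · intro a _
      simp [Finset.mem_powersetCard_univ, Finset.card_erase_of_mem, Finset.card_univ]
    · intro a _ b _ h
      by_contra hne
      have h' : Finset.univ.erase a = Finset.univ.erase b := h
      have : a ∈ Finset.univ.erase b := by
        simp [Finset.mem_erase, hne]
      rw [← h'] at this
      simp at this
    · intro J hJ
      rw [Finset.mem_powersetCard_univ] at hJ
      have hcard : (Finset.univ \ J).card = 1 := by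
        rw [Finset.card_sdiff_of_subset (Finset.subset_univ J), Finset.card_univ, Fintype.card_fin, hJ]
        omega
      obtain ⟨a, ha⟩ := Finset.card_eq_one.mp hcard
      refine ⟨a, Finset.mem_univ a, ?_⟩
      have : Finset.univ \ (Finset.univ \ J) = J :=
        Finset.sdiff_sdiff_eq_self (Finset.subset_univ J)
      rw [ha] at this
      rw [← this, Finset.sdiff_singleton_eq_erase]
    · intro a _; rfl
  refine ⟨h1, ?_⟩
  have key : ∀ J ∈ (Finset.univ : Finset (Fin s)).powersetCard (s - 1),
      ∏ h ∈ J, (A + X h) = ∑ T ∈ J.powerset, A ^ T.card * ∏ h ∈ J \ T, X h := by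
    intro J _
    rw [Finset.prod_add]
    exact Finset.sum_congr rfl fun T _ => by rw [Finset.prod_const]
  have inner : ∀ k ∈ Finset.range s,
      (∑ J ∈ (Finset.univ : Finset (Fin s)).powersetCard (s - 1),
        ∑ T ∈ J.powersetCard k, A ^ k * ∏ h ∈ J \ T, X h)
      = ((k + 1 : ℕ) : MvPolynomial (Fin s) R) * A ^ k *
          ∑ U ∈ (Finset.univ : Finset (Fin s)).powersetCard (s - 1 - k), ∏ j ∈ U, X j := by
    intro k hk
    have hk' : k < s := Finset.mem_range.mp hk
    have step : (∑ J ∈ (Finset.univ : Finset (Fin s)).powersetCard (s - 1),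
        ∑ T ∈ J.powersetCard k, ∏ h ∈ J \ T, X h : MvPolynomial (Fin s) R)
        = ∑ U ∈ (Finset.univ : Finset (Fin s)).powersetCard (s - 1 - k),
            ∑ T ∈ ((Finset.univ : Finset (Fin s)) \ U).powersetCard k, ∏ h ∈ U, X h := by
      rw [Finset.sum_sigma', Finset.sum_sigma']
      refine Finset.sum_nbij' (fun p => ⟨p.1 \ p.2, p.2⟩) (fun p => ⟨p.1 ∪ p.2, p.2⟩)
        ?_ ?_ ?_ ?_ ?_
      · rintro ⟨J, T⟩ hp
        rw [Finset.mem_sigma] at hp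
        obtain ⟨hJ, hT⟩ := hp
        rw [Finset.mem_powersetCard_univ] at hJ
        rw [Finset.mem_powersetCard] at hT
        obtain ⟨hTJ, hTc⟩ := hT
        rw [Finset.mem_sigma, Finset.mem_powersetCard_univ, Finset.mem_powersetCard]
        refine ⟨by rw [Finset.card_sdiff_of_subset hTJ, hJ, hTc], ?_, hTc⟩
        intro x hx
        rw [Finset.mem_sdiff]
        exact ⟨Finset.mem_univ x, by simp [Finset.mem_sdiff, hx]⟩
      · rintro ⟨U, T⟩ hp
        obtain ⟨hU, hT⟩ := Finset.mem_sigma.mp hp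
        rw [Finset.mem_powersetCard_univ] at hU
        obtain ⟨hTU, hTc⟩ := Finset.mem_powersetCard.mp hT
        have hdisj : Disjoint U T := by
          refine Finset.disjoint_left.mpr fun x hxU hxT => ?_
          have := hTU hxT
          rw [Finset.mem_sdiff] at this
          exact this.2 hxU
        rw [Finset.mem_sigma, Finset.mem_powersetCard_univ, Finset.mem_powersetCard]
        refine ⟨?_, Finset.subset_union_right, hTc⟩
        rw [Finset.card_union_of_disjoint hdisj, hU, hTc]
        omega
      · rintro ⟨J, T⟩ hp
        obtain ⟨hJ, hT⟩ := Finset.mem_sigma.mp hp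
        have hTJ := (Finset.mem_powersetCard.mp hT).1
        simp [Finset.sdiff_union_of_subset hTJ]
      · rintro ⟨U, T⟩ hp
        obtain ⟨hU, hT⟩ := Finset.mem_sigma.mp hp
        obtain ⟨hTU, hTc⟩ := Finset.mem_powersetCard.mp hT
        have hdisj : Disjoint U T := by
          refine Finset.disjoint_left.mpr fun x hxU hxT => ?_
          have := hTU hxT
          rw [Finset.mem_sdiff] at this
          exact this.2 hxU
        simp [Finset.union_sdiff_cancel_right hdisj]
      · rintro ⟨J, T⟩ _; rfl
    calc (∑ J ∈ (Finset.univ : Finset (Fin s)).powersetCard (s - 1),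
        ∑ T ∈ J.powersetCard k, A ^ k * ∏ h ∈ J \ T, X h)
        = A ^ k * ∑ J ∈ (Finset.univ : Finset (Fin s)).powersetCard (s - 1),
            ∑ T ∈ J.powersetCard k, ∏ h ∈ J \ T, X h := by
          rw [Finset.mul_sum]
          exact Finset.sum_congr rfl fun J _ => by rw [Finset.mul_sum]
      _ = A ^ k * ∑ U ∈ (Finset.univ : Finset (Fin s)).powersetCard (s - 1 - k),
            ∑ T ∈ ((Finset.univ : Finset (Fin s)) \ U).powersetCard k, ∏ h ∈ U, X h := by
          rw [step]
      _ = ((k + 1 : ℕ) : MvPolynomial (Fin s) R) * A ^ k *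
          ∑ U ∈ (Finset.univ : Finset (Fin s)).powersetCard (s - 1 - k), ∏ j ∈ U, X j := by
          simp only [Finset.mul_sum]
          refine Finset.sum_congr rfl fun U hU => ?_
          rw [Finset.mem_powersetCard_univ] at hU
          rw [Finset.sum_const]
          have hcard : (((Finset.univ : Finset (Fin s)) \ U).powersetCard k).card = k + 1 := by
            rw [Finset.card_powersetCard, Finset.card_sdiff_of_subset (Finset.subset_univ U),
              Finset.card_univ, Fintype.card_fin, hU]
            have : s - (s - 1 - k) = k + 1 := by omega
            rw [this, Nat.choose_succ_self_right]
          rw [hcard, nsmul_eq_mul]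
          push_cast
          ring
  calc (∑ h' : Fin s, ∏ h ∈ Finset.univ.erase h', (A + X h))
      = ∑ J ∈ (Finset.univ : Finset (Fin s)).powersetCard (s - 1),
          ∏ h ∈ J, (A + X h) := h1.symm
    _ = ∑ J ∈ (Finset.univ : Finset (Fin s)).powersetCard (s - 1),
          ∑ T ∈ J.powerset, A ^ T.card * ∏ h ∈ J \ T, X h := Finset.sum_congr rfl key
    _ = ∑ J ∈ (Finset.univ : Finset (Fin s)).powersetCard (s - 1),
          ∑ k ∈ Finset.range s, ∑ T ∈ J.powersetCard k, A ^ k * ∏ h ∈ J \ T, X h := by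
        refine Finset.sum_congr rfl fun J hJ => ?_
        rw [Finset.sum_powerset]
        have hJc : J.card = s - 1 := Finset.mem_powersetCard_univ.mp hJ
        rw [hJc, Nat.sub_add_cancel hs]
        refine Finset.sum_congr rfl fun k _ => Finset.sum_congr rfl fun T hT => ?_
        rw [(Finset.mem_powersetCard.mp hT).2]
    _ = ∑ k ∈ Finset.range s, ∑ J ∈ (Finset.univ : Finset (Fin s)).powersetCard (s - 1),
          ∑ T ∈ J.powersetCard k, A ^ k * ∏ h ∈ J \ T, X h := Finset.sum_comm
    _ = ∑ k ∈ Finset.range s, ((k + 1 : ℕ) : MvPolynomial (Fin s) R) * C e ^ k *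
          X (⟨0, hs⟩ : Fin s) ^ k *
          (∑ J ∈ (Finset.univ : Finset (Fin s)).powersetCard (s - 1 - k), ∏ j ∈ J, X j) := by
        refine Finset.sum_congr rfl fun k hk => ?_
        rw [inner k hk, hA, mul_pow]
        ring
end

section
/- Let $e_2 > e_1 \geq 1$ be integers, $n \geq 1$, $d \geq 1$ with $d \leq n$. Then there is at most one integer $b$ with $0 \leq b \leq d$ such that $e_1^b(e_1+1)e_2^{n-d}\bigl(e_2^{d+1} + (-1)^d\bigr) = e_2^b(e_2+1)e_1^{n-d}\bigl(e_1^{d+1} + (-1)^d\bigr)$. -/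
private lemma stmt8_key (e1 e2 : ℤ) (h1 : 1 ≤ e1) (h12 : e1 < e2) (n d : ℕ)
    (hd : 1 ≤ d) (b b' : ℕ) (hbb : b < b')
    (h : e1 ^ b * (e1 + 1) * e2 ^ (n - d) * (e2 ^ (d + 1) + (-1 : ℤ) ^ d)
        = e2 ^ b * (e2 + 1) * e1 ^ (n - d) * (e1 ^ (d + 1) + (-1 : ℤ) ^ d))
    (h' : e1 ^ b' * (e1 + 1) * e2 ^ (n - d) * (e2 ^ (d + 1) + (-1 : ℤ) ^ d)
        = e2 ^ b' * (e2 + 1) * e1 ^ (n - d) * (e1 ^ (d + 1) + (-1 : ℤ) ^ d)) :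
    False := by
  have he1 : (0:ℤ) < e1 := by linarith
  have he2 : (2:ℤ) ≤ e2 := by linarith
  set A : ℤ := (e1 + 1) * e2 ^ (n - d) * (e2 ^ (d + 1) + (-1 : ℤ) ^ d) with hA
  set F : ℤ := (e2 + 1) * e1 ^ (n - d) * (e1 ^ (d + 1) + (-1 : ℤ) ^ d) with hF
  have hApos : 0 < A := by
    have h2 : (0:ℤ) < e2 ^ (n-d) := pow_pos (by linarith) _
    have h3 : (0:ℤ) < e2 ^ (d+1) + (-1:ℤ)^d := by
      have h4 : (2:ℤ) ≤ e2 ^ (d+1) := le_trans he2 (le_self_pow₀ (by linarith) (by omega))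
      rcases neg_one_pow_eq_or ℤ d with h5 | h5 <;> rw [h5] <;> linarith
    have : (0:ℤ) < e1 + 1 := by linarith
    positivity
  obtain ⟨k, rfl⟩ : ∃ k, b' = b + (k + 1) := ⟨b' - b - 1, by omega⟩
  have h2 : e1 ^ b * A = e2 ^ b * F := by rw [hA, hF]; linear_combination h
  have h3 : e1 ^ b * e1 ^ (k+1) * A = e2 ^ b * e2 ^ (k+1) * F := by
    rw [hA, hF, ← pow_add, ← pow_add]; linear_combination h'
  have h4 : e1 ^ b * e1 ^ (k+1) * A = e2 ^ (k+1) * (e1 ^ b * A) := by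
    linear_combination h3 - e2^(k+1) * h2
  have h5 : e1 ^ b * A > 0 := mul_pos (pow_pos he1 _) hApos
  have h6 : e1 ^ (k+1) = e2 ^ (k+1) := by
    have := mul_left_cancel₀ (ne_of_gt h5) (by linear_combination h4 :
      (e1 ^ b * A) * e1 ^ (k+1) = (e1 ^ b * A) * e2 ^ (k+1))
    exact this
  have h7 : e1 ^ (k+1) < e2 ^ (k+1) := pow_lt_pow_left₀ h12 (by linarith) (by omega)
  linarith

/-- Uniqueness: for `e₂ > e₁ ≥ 1` there is at most one `0 ≤ b ≤ d` with
`e₁^b(e₁+1)e₂^{n-d}(e₂^{d+1}+(-1)^d) = e₂^b(e₂+1)e₁^{n-d}(e₁^{d+1}+(-1)^d)`. -/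
theorem stmt8 (e1 e2 : ℤ) (h1 : 1 ≤ e1) (h12 : e1 < e2) (n d : ℕ)
    (hn : 1 ≤ n) (hd : 1 ≤ d) (hdn : d ≤ n) :
    ∀ b b' : ℕ, b ≤ d → b' ≤ d →
      e1 ^ b * (e1 + 1) * e2 ^ (n - d) * (e2 ^ (d + 1) + (-1 : ℤ) ^ d)
        = e2 ^ b * (e2 + 1) * e1 ^ (n - d) * (e1 ^ (d + 1) + (-1 : ℤ) ^ d) →
      e1 ^ b' * (e1 + 1) * e2 ^ (n - d) * (e2 ^ (d + 1) + (-1 : ℤ) ^ d)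
        = e2 ^ b' * (e2 + 1) * e1 ^ (n - d) * (e1 ^ (d + 1) + (-1 : ℤ) ^ d) →
      b = b' := by
  intro b b' hb hb' h h'
  rcases lt_trichotomy b b' with hlt | heq | hgt
  · exact absurd (stmt8_key e1 e2 h1 h12 n d hd b b' hlt h h') (fun x => x)
  · exact heq
  · exact absurd (stmt8_key e1 e2 h1 h12 n d hd b' b hgt h' h) (fun x => x)
end

section
/- Let $n \geq 2$, $1 \leq r < n$, $d \geq 2$ be integers. Then the quantity $N = \binom{n+1}{r} \cdot r \cdot d^{r} \cdot (d-1)^{n-r+1} / \mathrm{lcm}(n+1, rd)$ is a positive integer; that is, $\mathrm{lcm}(n+1, rd)$ divides $\binom{n+1}{r}\, r\, d^{r}\, (d-1)^{n-r+1}$. -/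
/-- Integrality of Benoist's Picard group order:
`lcm(n+1, r·d)` divides `C(n+1, r) · r · d^r · (d-1)^{n-r+1}`. -/
theorem stmt15 (n r d : ℕ) (hn : 2 ≤ n) (hr1 : 1 ≤ r) (hrn : r < n) (hd : 2 ≤ d) :
    Nat.lcm (n + 1) (r * d) ∣ Nat.choose (n + 1) r * r * d ^ r * (d - 1) ^ (n - r + 1) := by
  obtain ⟨k, rfl⟩ : ∃ k, r = k + 1 := ⟨r - 1, by omega⟩
  apply Nat.lcm_dvd
  · have h : Nat.choose (n + 1) (k + 1) * (k + 1) = (n + 1) * Nat.choose n k :=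
      (Nat.add_one_mul_choose_eq n k).symm
    have : (n + 1) ∣ Nat.choose (n + 1) (k + 1) * (k + 1) := ⟨Nat.choose n k, h⟩
    exact (this.mul_right _).mul_right _
  · have h : Nat.choose (n + 1) (k + 1) * (k + 1) * d ^ (k + 1) =
        ((k + 1) * d) * (Nat.choose (n + 1) (k + 1) * d ^ k) := by
      rw [pow_succ]; ring
    exact Dvd.dvd.mul_right ⟨Nat.choose (n + 1) (k + 1) * d ^ k, h⟩ _
end
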